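/- Let p be a prime, let A be a commutative ring on which multiplication by p is injective, and let φ : A → A be a lift of the Frobenius. Then for every r ≥ 1 and all elements a₁, …, a_r ∈ A, the r-form d(φ(a₁)) ∧ ⋯ ∧ d(φ(a_r)) in the r-th exterior power ⋀^r_A Ω_{A/ℤ} lies in the submodule p^r · ⋀^r_A Ω_{A/ℤ}, i.e. the pullback along φ of an r-fold wedge of exact 1-forms is divisible by p^r. -/

import Mathlib

open Pointwise

/-!
Writing `φ a = a ^ p + p * b`, the Leibniz rule gives
`d (φ a) = p • (a ^ (p - 1) • d a + d b)`, since `d p = 0`. Each of the `r` factors of the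
wedge is thus `p` times a 1-form, and multilinearity pulls out `p ^ r`.
-/

theorem Derivation.map_pow_add_natCast_mul {R A M : Type*} [CommSemiring R] [CommSemiring A]
    [Algebra R A] [AddCommMonoid M] [Module A M] [Module R M] [IsScalarTower R A M]
    (D : Derivation R A M) (n : ℕ) (a b : A) :
    D (a ^ n + n * b) = (n : A) • (a ^ (n - 1) • D a + D b) := by
  rw [map_add, D.leibniz_pow, D.leibniz, D.map_natCast, smul_zero, add_zero]
  simp only [smul_add, Nat.cast_smul_eq_nsmul]

theorem ExteriorAlgebra.ιMulti_smul_mem_pow_smul_exteriorPower {R M : Type*} [CommRing R]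
    [AddCommGroup M] [Module R M] {r : ℕ} (c : R) (v : Fin r → M) :
    ιMulti R r (fun i => c • v i) ∈ c ^ r • ⋀[R]^r M := by
  rw [AlternatingMap.map_smul_univ (ιMulti R r) (fun _ => c) v, Finset.prod_const,
    Finset.card_univ, Fintype.card_fin]
  exact Submodule.smul_mem_pointwise_smul _ _ _ (ιMulti_range R r (Set.mem_range_self v))

theorem frobenius_lift_wedge_divisible_general (p : ℕ)
    (A : Type*) [CommRing A]
    (φ : A →+* A) (hφ : ∀ a : A, ∃ b : A, φ a = a ^ p + p * b)
    (r : ℕ) (a : Fin r → A) :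
    ExteriorAlgebra.ιMulti A r (fun i => KaehlerDifferential.D ℤ A (φ (a i))) ∈
      (p : A) ^ r • (⋀[A]^r (KaehlerDifferential ℤ A) :
        Submodule A (ExteriorAlgebra A (KaehlerDifferential ℤ A))) := by
  choose b hb using hφ
  simp only [hb, Derivation.map_pow_add_natCast_mul]
  exact ExteriorAlgebra.ιMulti_smul_mem_pow_smul_exteriorPower _ _

/-- Let `φ` be a Frobenius lift on a `p`-torsion-free commutative ring `A`. For every
`r ≥ 1` and `a₁, …, a_r ∈ A`, the `r`-form `d (φ a₁) ∧ ⋯ ∧ d (φ a_r)` lies in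
`p ^ r • ⋀[A]^r Ω[A⁄ℤ]`, i.e. it is divisible by `p ^ r` in the `r`-th exterior power. -/
theorem frobenius_lift_wedge_divisible (p : ℕ) [Fact p.Prime]
    (A : Type*) [CommRing A] (hA : Function.Injective fun a : A => (p : A) * a)
    (φ : A →+* A) (hφ : ∀ a : A, ∃ b : A, φ a = a ^ p + p * b)
    (r : ℕ) (hr : 1 ≤ r) (a : Fin r → A) :
    ExteriorAlgebra.ιMulti A r (fun i => KaehlerDifferential.D ℤ A (φ (a i))) ∈
      (p : A) ^ r • (⋀[A]^r (KaehlerDifferential ℤ A) :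
        Submodule A (ExteriorAlgebra A (KaehlerDifferential ℤ A))) :=
  frobenius_lift_wedge_divisible_general p A φ hφ r a
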